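/- arXiv:2008.11095 — 4 statements merged into one kernel-verified Lean document; each statement's English description precedes it below -/
import Mathlib

section
/- Let k be a kernel on X with |k(x,y) − k(u,v)| ≤ L‖x−y−(u−v)‖ for all x,y,u,v ∈ X. For samples X_n = {x_i}_{i=1}^n, Y_n = {y_i}_{i=1}^n in X and perturbed samples {x̃_i}, {ỹ_i}, the U-statistic MMD estimators satisfy |MMD̂²_k(X_n,Y_n) − MMD̂²_k(X̃_n,Ỹ_n)| ≤ (4L/n)·∑_{i=1}^n (‖x̃_i − x_i‖ + ‖ỹ_i − y_i‖). -/
open scoped BigOperators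

/-- The U-statistic MMD estimator: `(1/(n(n−1))) ∑_{i≠j} h(z_i, z_j)` where
`h(z_i,z_j) = k(x_i,x_j) + k(y_i,y_j) − k(x_i,y_j) − k(x_j,y_i)`. -/
noncomputable def mmdHatSq {X : Type*} (k : X → X → ℝ) {n : ℕ} (x y : Fin n → X) : ℝ :=
  (1 / ((n : ℝ) * ((n : ℝ) - 1))) * ∑ i : Fin n, ∑ j : Fin n,
    if i = j then 0 else
      (k (x i) (x j) + k (y i) (y j) - k (x i) (y j) - k (x j) (y i))

/-- If the kernel `k` satisfies `|k(x,y) − k(u,v)| ≤ L‖x−y−(u−v)‖`, then the U-statistic MMD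
estimators computed from samples and from perturbed (reconstructed) samples differ by at most
`(4L/n) ∑ᵢ (‖x̃_i − x_i‖ + ‖ỹ_i − y_i‖)`. -/
theorem mmdHatSq_perturbation_bound
    {X : Type*} [NormedAddCommGroup X] (k : X → X → ℝ) (L : ℝ) (hL : 0 < L)
    (hsym : ∀ a b, k a b = k b a)
    (hk : ∀ x y u v : X, |k x y - k u v| ≤ L * ‖x - y - (u - v)‖)
    (n : ℕ) (hn : 1 < n) (x y xt yt : Fin n → X) :
    |mmdHatSq k x y - mmdHatSq k xt yt| ≤
      (4 * L / n) * ∑ i : Fin n, (‖xt i - x i‖ + ‖yt i - y i‖) := by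
  have hn1 : (1:ℝ) < (n:ℝ) := by exact_mod_cast hn
  have hnpos : (0:ℝ) < (n:ℝ) := by linarith
  have hn1pos : (0:ℝ) < (n:ℝ) - 1 := by linarith
  set c : Fin n → ℝ := fun i => ‖xt i - x i‖ + ‖yt i - y i‖ with hc
  have hbnd : ∀ p q r s : X, |k p q - k r s| ≤ L * (‖r - p‖ + ‖s - q‖) := by
    intro p q r s
    refine (hk p q r s).trans (mul_le_mul_of_nonneg_left ?_ hL.le)
    have h : p - q - (r - s) = (p - r) - (q - s) := by abel
    rw [h]
    calc ‖(p - r) - (q - s)‖ ≤ ‖p - r‖ + ‖q - s‖ := norm_sub_le _ _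
      _ = ‖r - p‖ + ‖s - q‖ := by rw [norm_sub_rev, norm_sub_rev q]
  have hterm : ∀ i j : Fin n,
      |(k (x i) (x j) + k (y i) (y j) - k (x i) (y j) - k (x j) (y i)) -
        (k (xt i) (xt j) + k (yt i) (yt j) - k (xt i) (yt j) - k (xt j) (yt i))| ≤
      2 * L * (c i + c j) := by
    intro i j
    have h1 := abs_le.mp (hbnd (x i) (x j) (xt i) (xt j))
    have h2 := abs_le.mp (hbnd (y i) (y j) (yt i) (yt j))
    have h3 := abs_le.mp (hbnd (x i) (y j) (xt i) (yt j))
    have h4 := abs_le.mp (hbnd (x j) (y i) (xt j) (yt i))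
    rw [abs_le]
    simp only [hc]
    constructor <;> [nlinarith [h1.1,h1.2,h2.1,h2.2,h3.1,h3.2,h4.1,h4.2]; nlinarith [h1.1,h1.2,h2.1,h2.2,h3.1,h3.2,h4.1,h4.2]]
  have expand : mmdHatSq k x y - mmdHatSq k xt yt
      = (1 / ((n:ℝ) * ((n:ℝ) - 1))) * ∑ i : Fin n, ∑ j : Fin n,
          (if i = j then 0 else
            ((k (x i) (x j) + k (y i) (y j) - k (x i) (y j) - k (x j) (y i)) -
             (k (xt i) (xt j) + k (yt i) (yt j) - k (xt i) (yt j) - k (xt j) (yt i)))) := by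
    unfold mmdHatSq
    rw [← mul_sub, ← Finset.sum_sub_distrib]
    congr 1
    refine Finset.sum_congr rfl fun i _ => ?_
    rw [← Finset.sum_sub_distrib]
    refine Finset.sum_congr rfl fun j _ => ?_
    split <;> ring
  have coef0 : (0:ℝ) ≤ 1 / ((n:ℝ) * ((n:ℝ) - 1)) := by positivity
  rw [expand, abs_mul, abs_of_nonneg coef0]
  have step1 : |∑ i : Fin n, ∑ j : Fin n,
      (if i = j then 0 else
        ((k (x i) (x j) + k (y i) (y j) - k (x i) (y j) - k (x j) (y i)) -
         (k (xt i) (xt j) + k (yt i) (yt j) - k (xt i) (yt j) - k (xt j) (yt i))))| ≤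
      ∑ i : Fin n, ∑ j : Fin n, (if i = j then 0 else 2 * L * (c i + c j)) := by
    refine (Finset.abs_sum_le_sum_abs _ _).trans (Finset.sum_le_sum fun i _ => ?_)
    refine (Finset.abs_sum_le_sum_abs _ _).trans (Finset.sum_le_sum fun j _ => ?_)
    split
    · simp
    · exact hterm i j
  have sumcalc : ∑ i : Fin n, ∑ j : Fin n, (if i = j then 0 else 2 * L * (c i + c j))
      = 4 * L * ((n:ℝ) - 1) * ∑ i : Fin n, c i := by
    have h1 : ∀ i : Fin n, ∑ j : Fin n, (if i = j then 0 else 2 * L * (c i + c j))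
        = (∑ j : Fin n, 2 * L * (c i + c j)) - 2 * L * (c i + c i) := by
      intro i
      have h2 : ∀ j : Fin n, (if i = j then 0 else 2 * L * (c i + c j))
          = 2 * L * (c i + c j) - (if i = j then 2 * L * (c i + c j) else 0) := by
        intro j; split <;> ring
      simp_rw [h2]
      rw [Finset.sum_sub_distrib, Finset.sum_ite_eq]
      simp
    simp_rw [h1]
    rw [Finset.sum_sub_distrib]
    have h3 : ∀ i : Fin n, ∑ j : Fin n, 2 * L * (c i + c j)
        = 2 * L * (n:ℝ) * c i + 2 * L * ∑ j : Fin n, c j := by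
      intro i
      simp_rw [mul_add, Finset.sum_add_distrib, Finset.mul_sum]
      simp [Finset.card_fin]
      ring
    simp_rw [h3]
    have h5 : ∑ i : Fin n, 2 * L * (c i + c i) = 4 * L * ∑ i : Fin n, c i := by
      simp_rw [show ∀ r : ℝ, 2 * L * (r + r) = 4 * L * r from fun r => by ring]
      rw [← Finset.mul_sum]
    rw [h5, Finset.sum_add_distrib]
    simp only [Finset.sum_const, Finset.card_fin, nsmul_eq_mul, ← Finset.sum_mul, ← Finset.mul_sum]
    ring
  calc (1 / ((n:ℝ) * ((n:ℝ) - 1))) * |∑ i : Fin n, ∑ j : Fin n,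
      (if i = j then 0 else
        ((k (x i) (x j) + k (y i) (y j) - k (x i) (y j) - k (x j) (y i)) -
         (k (xt i) (xt j) + k (yt i) (yt j) - k (xt i) (yt j) - k (xt j) (yt i))))|
      ≤ (1 / ((n:ℝ) * ((n:ℝ) - 1))) * (4 * L * ((n:ℝ) - 1) * ∑ i : Fin n, c i) := by
        rw [← sumcalc]; exact mul_le_mul_of_nonneg_left step1 coef0
    _ = (4 * L / n) * ∑ i : Fin n, c i := by
        field_simp
end

section
/- Let X be a real separable Hilbert space, k a bounded measurable kernel on X that is the Fourier transform of a finite Borel measure μ on X, i.e. k(x,y) = ∫_X exp(i⟨h, x−y⟩) dμ(h). Then for any Borel probability measures P, Q on X, MMD²_k(P,Q) = ∫_X |P̂(h) − Q̂(h)|² dμ(h), where P̂, Q̂ denote the Fourier transforms (characteristic functionals) of P and Q. -/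
open MeasureTheory
open scoped RealInnerProductSpace

/-- Squared Maximum Mean Discrepancy between `P` and `Q` with kernel `k`. -/
noncomputable def mmdSq {X : Type*} [MeasurableSpace X]
    (k : X → X → ℝ) (P Q : Measure X) : ℝ :=
  (∫ x, ∫ y, k x y ∂P ∂P) + (∫ x, ∫ y, k x y ∂Q ∂Q) - 2 * ∫ x, ∫ y, k x y ∂P ∂Q

/-- The Fourier transform (characteristic functional) of a measure on a real Hilbert space. -/
noncomputable def charFun {X : Type*} [NormedAddCommGroup X] [InnerProductSpace ℝ X]
    [MeasurableSpace X] (P : Measure X) (h : X) : ℂ :=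
  ∫ x, Complex.exp (Complex.I * ((⟪h, x⟫ : ℝ) : ℂ)) ∂P

/-!
Writing `e_h(x) = exp (i⟪x, h⟫)`, the kernel factors as `k(x, y) = ∫ e_h(x) · conj e_h(y) dμ(h)`.
All integrands are bounded and continuous and all measures finite, so Fubini gives
`∫∫ k d(ν₁ ⊗ ν₂) = ∫ ν̂₁ · conj ν̂₂ dμ`. Expanding `|P̂ - Q̂|² = (P̂ - Q̂) · conj (P̂ - Q̂)` then
yields the three terms of `MMD²`; the two mixed terms agree because `∫ Q̂ · conj P̂ dμ` is the
(real) cross term of `MMD²` and the other one is its conjugate.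
-/

open Complex
open scoped ComplexConjugate

section

variable {X : Type*} [NormedAddCommGroup X] [InnerProductSpace ℝ X]

lemma exp_I_mul_inner_sub_eq_mul_conj (h x y : X) :
    exp (I * ⟪h, x - y⟫) = exp (⟪x, h⟫ * I) * conj (exp (⟪y, h⟫ * I)) := by
  rw [← exp_conj, ← exp_add, inner_sub_right, real_inner_comm x, real_inner_comm y]
  simp only [map_mul, conj_ofReal, conj_I, ofReal_sub]
  ring_nf

variable [MeasurableSpace X]

lemma charFun_eq_measureTheory_charFun (P : Measure X) :
    _root_.charFun P = MeasureTheory.charFun P := by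
  ext h
  simp only [_root_.charFun, MeasureTheory.charFun_apply, real_inner_comm h, mul_comm I]

variable [SecondCountableTopology X] [BorelSpace X]
  (μ ν₁ ν₂ : Measure X) [IsFiniteMeasure μ] [IsFiniteMeasure ν₁] [IsFiniteMeasure ν₂]

lemma integrable_charFun_mul_conj_charFun :
    Integrable (fun h ↦ MeasureTheory.charFun ν₁ h * conj (MeasureTheory.charFun ν₂ h)) μ := by
  refine Integrable.of_bound (by fun_prop : Continuous _).aestronglyMeasurable
    (Measure.real ν₁ Set.univ * Measure.real ν₂ Set.univ) (ae_of_all _ fun h ↦ ?_)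
  rw [norm_mul, RCLike.norm_conj]
  exact mul_le_mul (norm_charFun_le h) (norm_charFun_le h) (norm_nonneg _) measureReal_nonneg

theorem integral_integral_integral_exp_I_mul_inner_sub :
    ∫ x, ∫ y, ∫ h, exp (I * ⟪h, x - y⟫) ∂μ ∂ν₂ ∂ν₁
      = ∫ h, MeasureTheory.charFun ν₁ h * conj (MeasureTheory.charFun ν₂ h) ∂μ := by
  have integral_swap_inner (x : X) : ∫ y, ∫ h, exp (I * ⟪h, x - y⟫) ∂μ ∂ν₂
      = ∫ h, exp (⟪x, h⟫ * I) * conj (MeasureTheory.charFun ν₂ h) ∂μ := by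
    simp_rw [exp_I_mul_inner_sub_eq_mul_conj]
    rw [integral_integral_swap]
    · simp_rw [integral_const_mul, integral_conj, charFun_apply]
    refine Integrable.of_bound (by fun_prop : Continuous _).aestronglyMeasurable 1
      (ae_of_all _ fun p ↦ ?_)
    simp only [Function.uncurry, norm_mul, RCLike.norm_conj, norm_exp_ofReal_mul_I, mul_one,
      le_refl]
  simp_rw [integral_swap_inner]
  rw [integral_integral_swap]
  · simp_rw [integral_mul_const, charFun_apply]
  refine Integrable.of_bound (by fun_prop : Continuous _).aestronglyMeasurable
    (Measure.real ν₂ Set.univ) (ae_of_all _ fun p ↦ ?_)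
  simpa only [Function.uncurry, norm_mul, RCLike.norm_conj, norm_exp_ofReal_mul_I, one_mul]
    using norm_charFun_le p.2

lemma ofReal_integral_norm_charFun_sub_sq :
    ((∫ h, ‖MeasureTheory.charFun ν₁ h - MeasureTheory.charFun ν₂ h‖ ^ 2 ∂μ : ℝ) : ℂ)
      = ∫ h, MeasureTheory.charFun ν₁ h * conj (MeasureTheory.charFun ν₁ h) ∂μ
        + ∫ h, MeasureTheory.charFun ν₂ h * conj (MeasureTheory.charFun ν₂ h) ∂μ
        - ∫ h, MeasureTheory.charFun ν₁ h * conj (MeasureTheory.charFun ν₂ h) ∂μ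
        - ∫ h, MeasureTheory.charFun ν₂ h * conj (MeasureTheory.charFun ν₁ h) ∂μ := by
  have hint := integrable_charFun_mul_conj_charFun μ
  rw [← integral_complex_ofReal]
  simp_rw [ofReal_pow, ← mul_conj', map_sub, mul_sub, sub_mul]
  rw [integral_sub, integral_sub (hint ν₁ ν₁) (hint ν₂ ν₁),
    integral_sub (hint ν₁ ν₂) (hint ν₂ ν₂)]
  · ring
  · exact (hint ν₁ ν₁).sub (hint ν₂ ν₁)
  · exact (hint ν₁ ν₂).sub (hint ν₂ ν₂)

end

theorem mmdSq_eq_integral_sq_abs_charFun_sub_general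
    {X : Type*} [NormedAddCommGroup X] [InnerProductSpace ℝ X]
    [TopologicalSpace.SeparableSpace X] [MeasurableSpace X] [BorelSpace X]
    (k : X → X → ℝ)
    (mu : Measure X) [IsFiniteMeasure mu]
    (hk : ∀ x y : X, (k x y : ℂ) = ∫ h, Complex.exp (Complex.I * ((⟪h, x - y⟫ : ℝ) : ℂ)) ∂mu)
    (P Q : Measure X) [IsProbabilityMeasure P] [IsProbabilityMeasure Q] :
    mmdSq k P Q = ∫ h, ‖_root_.charFun P h - _root_.charFun Q h‖ ^ 2 ∂mu := by
  have cross (ν₁ ν₂ : Measure X) [IsFiniteMeasure ν₁] [IsFiniteMeasure ν₂] :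
      ((∫ x, ∫ y, k x y ∂ν₂ ∂ν₁ : ℝ) : ℂ)
        = ∫ h, MeasureTheory.charFun ν₁ h * conj (MeasureTheory.charFun ν₂ h) ∂mu := by
    simp_rw [← integral_complex_ofReal, hk]
    exact integral_integral_integral_exp_I_mul_inner_sub mu ν₁ ν₂
  have cross_symm : ∫ h, MeasureTheory.charFun P h * conj (MeasureTheory.charFun Q h) ∂mu
      = ∫ h, MeasureTheory.charFun Q h * conj (MeasureTheory.charFun P h) ∂mu := by
    rw [← cross Q P, ← conj_ofReal, cross Q P, ← integral_conj]
    simp_rw [map_mul, conj_conj, mul_comm]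
  apply ofReal_injective
  rw [charFun_eq_measureTheory_charFun P, charFun_eq_measureTheory_charFun Q,
    ofReal_integral_norm_charFun_sub_sq, mmdSq, cross_symm]
  push_cast
  rw [cross, cross, cross]
  ring

/-- If the bounded measurable kernel `k` on a real separable Hilbert space `X` is the Fourier
transform of a finite Borel measure `μ`, then for Borel probability measures `P, Q`,
`MMD²_k(P,Q) = ∫ |P̂(h) − Q̂(h)|² dμ(h)`. -/
theorem mmdSq_eq_integral_sq_abs_charFun_sub
    {X : Type*} [NormedAddCommGroup X] [InnerProductSpace ℝ X] [CompleteSpace X]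
    [TopologicalSpace.SeparableSpace X] [MeasurableSpace X] [BorelSpace X]
    (k : X → X → ℝ) (hbdd : ∃ M : ℝ, ∀ x y, |k x y| ≤ M)
    (hmeas : Measurable fun p : X × X => k p.1 p.2)
    (mu : Measure X) [IsFiniteMeasure mu]
    (hk : ∀ x y : X, (k x y : ℂ) = ∫ h, Complex.exp (Complex.I * ((⟪h, x - y⟫ : ℝ) : ℂ)) ∂mu)
    (P Q : Measure X) [IsProbabilityMeasure P] [IsProbabilityMeasure Q] :
    mmdSq k P Q = ∫ h, ‖_root_.charFun P h - _root_.charFun Q h‖ ^ 2 ∂mu :=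
  mmdSq_eq_integral_sq_abs_charFun_sub_general k mu hk P Q
end

section
/- Let X be a Polish space and k a bounded continuous characteristic kernel on X × X. If a sequence of Borel probability measures P_n converges weakly to P, then MMD_k(P_n, P) → 0. -/
/-!
For the weak topology, `MMD²` is a continuous function of the pair `(P, Q)`: each of its three
terms is, by Fubini, the integral of the bounded continuous function `k` against a product of
probability measures, and forming products of probability measures is weakly continuous on
second countable metrizable spaces. Since `mmdSq k P P = 0`, weak convergence `P n → P0` forces
`mmdSq k (P n) P0 → 0`.
-/

open MeasureTheory Filter

lemma mmdSq_self {X : Type*} [MeasurableSpace X] (k : X → X → ℝ) (P : Measure X) :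
    mmdSq k P P = 0 := by
  rw [mmdSq]
  ring

section WeakConvergence

open scoped BoundedContinuousFunction

variable {X Y : Type*} [TopologicalSpace X] [MeasurableSpace X] [OpensMeasurableSpace X]
  [SecondCountableTopology X] [TopologicalSpace.PseudoMetrizableSpace X]
  [TopologicalSpace Y] [MeasurableSpace Y] [OpensMeasurableSpace Y]
  [SecondCountableTopology Y] [TopologicalSpace.PseudoMetrizableSpace Y]

theorem continuous_integral_integral_boundedContinuousFunction (f : X × Y →ᵇ ℝ) :
    Continuous fun μ : ProbabilityMeasure X × ProbabilityMeasure Y =>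
      ∫ x, ∫ y, f (x, y) ∂(μ.2 : Measure Y) ∂(μ.1 : Measure X) := by
  have fubini : ∀ μ : ProbabilityMeasure X × ProbabilityMeasure Y,
      ∫ x, ∫ y, f (x, y) ∂(μ.2 : Measure Y) ∂(μ.1 : Measure X)
        = ∫ z, f z ∂(μ.1.prod μ.2 : Measure (X × Y)) :=
    fun μ => integral_integral (f.integrable _)
  simp_rw [fubini]
  exact (ProbabilityMeasure.continuous_integral_boundedContinuousFunction f).comp
    ProbabilityMeasure.continuous_prod

theorem continuous_mmdSq (k : X → X → ℝ) (hcont : Continuous fun p : X × X => k p.1 p.2)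
    (hbdd : ∃ M : ℝ, ∀ x y, |k x y| ≤ M) :
    Continuous fun μ : ProbabilityMeasure X × ProbabilityMeasure X =>
      mmdSq k (μ.1 : Measure X) μ.2 := by
  obtain ⟨M, hM⟩ := hbdd
  let kb : X × X →ᵇ ℝ :=
    .ofNormedAddCommGroup (fun p => k p.1 p.2) hcont M fun p =>
      (Real.norm_eq_abs _).trans_le (hM _ _)
  have hk := continuous_integral_integral_boundedContinuousFunction kb
  exact ((hk.comp (continuous_fst.prodMk continuous_fst)).add
    (hk.comp (continuous_snd.prodMk continuous_snd))).sub
    (continuous_const.mul (hk.comp continuous_swap))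

end WeakConvergence

theorem mmd_tendsto_zero_of_weak_convergence_general
    {X : Type*} [TopologicalSpace X] [PolishSpace X] [MeasurableSpace X] [BorelSpace X]
    (k : X → X → ℝ)
    (hbdd : ∃ M : ℝ, ∀ x y, |k x y| ≤ M)
    (hcont : Continuous fun p : X × X => k p.1 p.2)
    (P : ℕ → Measure X) (hPn : ∀ n, IsProbabilityMeasure (P n))
    (P0 : Measure X) [IsProbabilityMeasure P0]
    (hweak : ∀ f : BoundedContinuousFunction X ℝ,
      Tendsto (fun n => ∫ x, f x ∂(P n)) atTop (nhds (∫ x, f x ∂P0))) :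
    Tendsto (fun n => Real.sqrt (mmdSq k (P n) P0)) atTop (nhds 0) := by
  let μ : ProbabilityMeasure X := ⟨P0, inferInstance⟩
  let μs : ℕ → ProbabilityMeasure X := fun n => ⟨P n, hPn n⟩
  have hP : Tendsto μs atTop (nhds μ) :=
    ProbabilityMeasure.tendsto_iff_forall_integral_tendsto.2 hweak
  have hmmd := ((continuous_mmdSq k hcont hbdd).tendsto (μ, μ)).comp
    (hP.prodMk_nhds tendsto_const_nhds)
  rw [mmdSq_self] at hmmd
  rw [← Real.sqrt_zero]
  exact hmmd.sqrt

/-- Let `X` be a Polish space and `k` a bounded continuous characteristic kernel on `X × X`.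
If Borel probability measures `P_n` converge weakly to `P` (i.e. integrals of every bounded
continuous function converge), then `MMD_k(P_n, P) → 0`. -/
theorem mmd_tendsto_zero_of_weak_convergence
    {X : Type*} [TopologicalSpace X] [PolishSpace X] [MeasurableSpace X] [BorelSpace X]
    (k : X → X → ℝ) (hsym : ∀ x y, k x y = k y x)
    (hpd : ∀ (N : ℕ) (a : Fin N → ℝ) (x : Fin N → X),
      0 ≤ ∑ i : Fin N, ∑ j : Fin N, a i * a j * k (x i) (x j))
    (hbdd : ∃ M : ℝ, ∀ x y, |k x y| ≤ M)
    (hcont : Continuous fun p : X × X => k p.1 p.2)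
    (hchar : ∀ P Q : Measure X, IsProbabilityMeasure P → IsProbabilityMeasure Q →
      mmdSq k P Q = 0 → P = Q)
    (P : ℕ → Measure X) (hPn : ∀ n, IsProbabilityMeasure (P n))
    (P0 : Measure X) [IsProbabilityMeasure P0]
    (hweak : ∀ f : BoundedContinuousFunction X ℝ,
      Tendsto (fun n => ∫ x, f x ∂(P n)) atTop (nhds (∫ x, f x ∂P0))) :
    Tendsto (fun n => Real.sqrt (mmdSq k (P n) P0)) atTop (nhds 0) :=
  mmd_tendsto_zero_of_weak_convergence_general k hbdd hcont P hPn P0 hweak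
end

section
/- Let X be a real separable Hilbert space with orthonormal basis {e_n}, T ∈ L⁺(X) given by Tx = ∑_n λ_n^{1/2}⟨x,e_n⟩e_n with bounded positive λ_n. Then the SE-T kernel admits the expansion k_T(x,y) = ∑_{γ ∈ Γ} φ_γ(x)φ_γ(y), where Γ is the set of finitely-supported multi-indices over ℕ, φ_γ(x) = √(λ^γ/γ!)·exp(−(1/2)‖Tx‖²)·x^γ, x^γ = ∏_n ⟨x,e_n⟩^{γ_n}, λ^γ = ∏_n λ_n^{γ_n}, γ! = ∏_n γ_n!, and the sum converges pointwise. -/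
/-!
Writing `‖Tx - Ty‖² = ‖Tx‖² + ‖Ty‖² - 2⟪Tx, Ty⟫` splits `k_T(x, y)` into
`exp(-½‖Tx‖²) exp(-½‖Ty‖²) exp ⟪Tx, Ty⟫`, and `⟪Tx, Ty⟫ = ∑ₙ λₙ xₙ yₙ` by Parseval. For any
absolutely convergent series `S = ∑ₙ aₙ`, grouping multi-indices by total degree `m` and applying
the multinomial theorem to each group gives `exp S = ∑_γ a^γ / γ!`; with `aₙ = λₙ xₙ yₙ` the
terms are exactly `φ_γ(x) φ_γ(y)` up to the two Gaussian factors.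
-/

open scoped RealInnerProductSpace Nat
open Finset Filter

section MultiIndexExp

variable {ι : Type*}

theorem sum_finsuppAntidiag_prod_pow_div_factorial {K : Type*} [Field K] [CharZero K]
    [DecidableEq ι] (a : ι → K) (s : Finset ι) (m : ℕ) :
    ∑ γ ∈ s.finsuppAntidiag m, γ.prod (fun i k => a i ^ k / (k ! : K)) =
      (∑ i ∈ s, a i) ^ m / (m ! : K) := by
  have hfinsupp : ∑ γ ∈ s.finsuppAntidiag m, γ.prod (fun i k => a i ^ k / (k ! : K)) =
      ∑ f ∈ s.piAntidiag m, ∏ i ∈ s, a i ^ f i / ((f i)! : K) := by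
    rw [finsuppAntidiag, sum_map, ← sum_attach (s.piAntidiag m)]
    exact sum_congr rfl fun f _ =>
      Finsupp.prod_of_support_subset _ (filter_subset _ _) _ fun i _ => by simp
  rw [hfinsupp, sum_pow_eq_sum_piAntidiag, sum_div]
  refine sum_congr rfl fun f hf => ?_
  have hspec : (∏ i ∈ s, ((f i)! : K)) * (Nat.multinomial s f : K) = (m ! : K) := by
    rw [← (mem_piAntidiag.1 hf).1]
    exact_mod_cast Nat.multinomial_spec s f
  have hprod : (∏ i ∈ s, ((f i)! : K)) ≠ 0 :=
    prod_ne_zero_iff.2 fun i _ => Nat.cast_ne_zero.2 (Nat.factorial_ne_zero _)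
  rw [prod_div_distrib, div_eq_div_iff hprod (Nat.cast_ne_zero.2 (Nat.factorial_ne_zero m)),
    ← hspec]
  ring

theorem summable_finsupp_prod_pow_div_factorial_of_nonneg {b : ι → ℝ} (hb : Summable b)
    (hb0 : ∀ i, 0 ≤ b i) :
    Summable fun γ : ι →₀ ℕ => γ.prod fun i k => b i ^ k / (k ! : ℝ) := by
  classical
  have hnonneg : ∀ γ : ι →₀ ℕ, 0 ≤ γ.prod fun i k => b i ^ k / (k ! : ℝ) := fun γ =>
    prod_nonneg fun i _ => div_nonneg (pow_nonneg (hb0 i) _) (Nat.cast_nonneg _)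
  refine summable_of_sum_le (c := Real.exp (∑' i, b i)) hnonneg fun u => ?_
  -- `u` lies in the multi-indices supported in `s` of total degree at most `N`.
  set s : Finset ι := u.sup Finsupp.support
  set N : ℕ := u.sup Finsupp.degree
  have hsub : u ⊆ (range (N + 1)).biUnion (s.finsuppAntidiag ·) := fun γ hγ =>
    mem_biUnion.2 ⟨γ.degree, mem_range.2 (Nat.lt_succ_of_le (le_sup (f := Finsupp.degree) hγ)),
      mem_finsuppAntidiag'.2 ⟨rfl, le_sup (f := Finsupp.support) hγ⟩⟩
  have hdisj : (range (N + 1) : Set ℕ).PairwiseDisjoint (s.finsuppAntidiag ·) :=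
    fun m _ m' _ hne => disjoint_left.2 fun γ h h' =>
      hne ((mem_finsuppAntidiag'.1 h).1.symm.trans (mem_finsuppAntidiag'.1 h').1)
  calc ∑ γ ∈ u, γ.prod (fun i k => b i ^ k / (k ! : ℝ))
      ≤ ∑ γ ∈ (range (N + 1)).biUnion (s.finsuppAntidiag ·),
          γ.prod (fun i k => b i ^ k / (k ! : ℝ)) :=
        sum_le_sum_of_subset_of_nonneg hsub fun γ _ _ => hnonneg γ
    _ = ∑ m ∈ range (N + 1), (∑ i ∈ s, b i) ^ m / (m ! : ℝ) := by
        rw [sum_biUnion hdisj]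
        exact sum_congr rfl fun m _ => sum_finsuppAntidiag_prod_pow_div_factorial b s m
    _ ≤ ∑ m ∈ range (N + 1), (∑' i, b i) ^ m / (m ! : ℝ) := by
        gcongr
        · exact sum_nonneg fun i _ => hb0 i
        · exact hb.sum_le_tsum s fun i _ => hb0 i
    _ ≤ Real.exp (∑' i, b i) := Real.sum_le_exp_of_nonneg (tsum_nonneg hb0) _

theorem summable_finsupp_prod_pow_div_factorial {a : ι → ℝ} (ha : Summable a) :
    Summable fun γ : ι →₀ ℕ => γ.prod fun i k => a i ^ k / (k ! : ℝ) := by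
  refine .of_norm_bounded
    (summable_finsupp_prod_pow_div_factorial_of_nonneg ha.abs fun i => abs_nonneg _)
    fun γ => le_of_eq ?_
  simp [Finsupp.prod]

theorem hasSum_prod_pow_div_factorial_degree_eq {a : ι → ℝ} {S : ℝ} (ha : HasSum a S)
    (m : ℕ) :
    HasSum (fun γ : {γ : ι →₀ ℕ // γ.degree = m} => γ.1.prod fun i k => a i ^ k / (k ! : ℝ))
      (S ^ m / (m ! : ℝ)) := by
  classical
  set F : (ι →₀ ℕ) → ℝ := fun γ => γ.prod fun i k => a i ^ k / (k ! : ℝ)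
  have hF : Summable fun γ : {γ : ι →₀ ℕ // γ.degree = m} => F γ :=
    (summable_finsupp_prod_pow_div_factorial ha.summable).comp_injective Subtype.val_injective
  -- The sum over the fibre is the limit of its sums over the finite pieces `s.finsuppAntidiag m`.
  let Φ : Finset ι → Finset {γ : ι →₀ ℕ // γ.degree = m} :=
    fun s => (s.finsuppAntidiag m).subtype _
  have hΦ : Tendsto Φ atTop atTop := by
    refine tendsto_atTop_finset_of_monotone
      (fun s t hst => subtype_mono (finsuppAntidiag_mono hst m)) fun γ => ⟨γ.1.support, ?_⟩
    rw [mem_subtype, mem_finsuppAntidiag']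
    exact ⟨γ.2, subset_rfl⟩
  have hpartial : ∀ s, ∑ γ ∈ Φ s, F γ = (∑ i ∈ s, a i) ^ m / (m ! : ℝ) := fun s => by
    rw [← sum_finsuppAntidiag_prod_pow_div_factorial]
    exact sum_subtype_of_mem F fun γ hγ => (mem_finsuppAntidiag'.1 hγ).1
  have hlim : Tendsto (fun s => (∑ i ∈ s, a i) ^ m / (m ! : ℝ)) atTop (nhds (S ^ m / (m ! : ℝ))) :=
    (ha.pow m).div_const _
  refine hF.hasSum_iff.2 (tendsto_nhds_unique (hF.hasSum.comp hΦ) ?_)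
  simpa only [Function.comp_def, hpartial] using hlim

theorem hasSum_finsupp_prod_pow_div_factorial {a : ι → ℝ} {S : ℝ} (ha : HasSum a S) :
    HasSum (fun γ : ι →₀ ℕ => γ.prod fun i k => a i ^ k / (k ! : ℝ)) (Real.exp S) := by
  let σ := Equiv.sigmaFiberEquiv (Finsupp.degree : (ι →₀ ℕ) → ℕ)
  have hexp : HasSum (fun m : ℕ => S ^ m / (m ! : ℝ)) (Real.exp S) := by
    rw [Real.exp_eq_exp_ℝ]
    exact NormedSpace.expSeries_div_hasSum_exp S
  exact σ.hasSum_iff.1 (hexp.sigma_of_hasSum (hasSum_prod_pow_div_factorial_degree_eq ha)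
    (σ.summable_iff.2 (summable_finsupp_prod_pow_div_factorial ha.summable)))

theorem Finsupp.mul_self_sqrt_prod_pow_div_prod_factorial_mul (g : ι →₀ ℕ) (lam u v : ι → ℝ)
    (hlam : ∀ i, 0 ≤ lam i) :
    √((g.prod fun i k => lam i ^ k) / g.prod fun _ k => (k ! : ℝ)) *
        √((g.prod fun i k => lam i ^ k) / g.prod fun _ k => (k ! : ℝ)) *
        ((g.prod fun i k => u i ^ k) * g.prod fun i k => v i ^ k) =
      g.prod fun i k => (lam i * (u i * v i)) ^ k / (k ! : ℝ) := by
  rw [Real.mul_self_sqrt]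
  · simp only [Finsupp.prod, ← prod_mul_distrib, ← prod_div_distrib]
    exact Finset.prod_congr rfl fun i _ => by ring
  · exact div_nonneg (prod_nonneg fun i _ => pow_nonneg (hlam i) _)
      (prod_nonneg fun _ _ => Nat.cast_nonneg _)

end MultiIndexExp

theorem Orthonormal.inner_right_of_hasSum {ι 𝕜 E : Type*} [RCLike 𝕜] [NormedAddCommGroup E]
    [InnerProductSpace 𝕜 E] {v : ι → E} (hv : Orthonormal 𝕜 v) {c : ι → 𝕜} {x : E}
    (hx : HasSum (fun i => c i • v i) x) (i : ι) : inner 𝕜 (v i) x = c i := by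
  classical
  have h := hx.mapL (innerSL 𝕜 (v i))
  simp only [innerSL_apply_apply, inner_smul_right, orthonormal_iff_ite.1 hv, mul_ite, mul_one,
    mul_zero] at h
  simpa using h.unique (hasSum_single i fun j hj => if_neg (Ne.symm hj))

theorem HilbertBasis.hasSum_inner_of_hasSum_diagonal {ι X : Type*} [NormedAddCommGroup X]
    [InnerProductSpace ℝ X] (e : HilbertBasis ι ℝ X) {lam : ι → ℝ} (hlam : ∀ i, 0 ≤ lam i)
    {T : X → X} (hT : ∀ x, HasSum (fun i => (√(lam i) * ⟪x, e i⟫) • e i) (T x)) (x y : X) :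
    HasSum (fun i => lam i * (⟪x, e i⟫ * ⟪y, e i⟫)) ⟪T x, T y⟫ := by
  have hcoef (z : X) (i : ι) : ⟪e i, T z⟫ = √(lam i) * ⟪z, e i⟫ :=
    e.orthonormal.inner_right_of_hasSum (hT z) i
  have hterm (i : ι) : ⟪T x, e i⟫ * ⟪e i, T y⟫ = lam i * (⟪x, e i⟫ * ⟪y, e i⟫) := by
    rw [real_inner_comm, hcoef, hcoef]
    linear_combination (⟪x, e i⟫ * ⟪y, e i⟫) * Real.mul_self_sqrt (hlam i)
  simpa only [hterm] using e.hasSum_inner_mul_inner (T x) (T y)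

theorem seT_kernel_feature_expansion_general
    {X : Type*} [NormedAddCommGroup X] [InnerProductSpace ℝ X]
    (e : HilbertBasis ℕ ℝ X) (lam : ℕ → ℝ) (hpos : ∀ n, 0 < lam n)
    (T : X →L[ℝ] X)
    (hT : ∀ x : X, HasSum (fun n => (Real.sqrt (lam n) * ⟪x, e n⟫) • e n) (T x))
    (phi : (ℕ →₀ ℕ) → X → ℝ)
    (hphi : ∀ (g : ℕ →₀ ℕ) (x : X), phi g x =
      Real.sqrt ((g.prod fun n k => lam n ^ k) / (g.prod fun n k => (Nat.factorial k : ℝ))) *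
        Real.exp (-(1/2) * ‖T x‖ ^ 2) * g.prod fun n k => (⟪x, e n⟫ : ℝ) ^ k) :
    ∀ x y : X, HasSum (fun g : ℕ →₀ ℕ => phi g x * phi g y)
      (Real.exp (-(1/2) * ‖T x - T y‖ ^ 2)) := by
  intro x y
  have hkernel : Real.exp (-(1/2) * ‖T x - T y‖ ^ 2) =
      Real.exp (-(1/2) * ‖T x‖ ^ 2) * Real.exp (-(1/2) * ‖T y‖ ^ 2) * Real.exp ⟪T x, T y⟫ := by
    rw [← Real.exp_add, ← Real.exp_add, norm_sub_sq_real]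
    congr 1
    ring
  have hterm (g : ℕ →₀ ℕ) : phi g x * phi g y =
      Real.exp (-(1/2) * ‖T x‖ ^ 2) * Real.exp (-(1/2) * ‖T y‖ ^ 2) *
        g.prod fun n k => (lam n * (⟪x, e n⟫ * ⟪y, e n⟫)) ^ k / (k ! : ℝ) := by
    rw [hphi, hphi, ← g.mul_self_sqrt_prod_pow_div_prod_factorial_mul lam _ _ fun n => (hpos n).le]
    ring
  rw [hkernel, funext hterm]
  exact (hasSum_finsupp_prod_pow_div_factorial
    (e.hasSum_inner_of_hasSum_diagonal (fun n => (hpos n).le) hT x y)).mul_left _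

/-- Let `X` be a real separable Hilbert space with Hilbert basis `{e_n}` and
`T x = ∑_n λ_n^{1/2} ⟨x, e_n⟩ e_n` with bounded positive coefficients `λ_n`. Then the SE-`T`
kernel admits the pointwise-convergent expansion
`k_T(x,y) = ∑_{γ ∈ Γ} φ_γ(x) φ_γ(y)` over finitely supported multi-indices `γ : ℕ →₀ ℕ`,
where `φ_γ(x) = √(λ^γ/γ!) exp(−(1/2)‖Tx‖²) x^γ`, `x^γ = ∏_n ⟨x,e_n⟩^{γ_n}`,
`λ^γ = ∏_n λ_n^{γ_n}` and `γ! = ∏_n γ_n!`. -/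
theorem seT_kernel_feature_expansion
    {X : Type*} [NormedAddCommGroup X] [InnerProductSpace ℝ X] [CompleteSpace X]
    [TopologicalSpace.SeparableSpace X]
    (e : HilbertBasis ℕ ℝ X) (lam : ℕ → ℝ) (hpos : ∀ n, 0 < lam n)
    (hbdd : ∃ M : ℝ, ∀ n, lam n ≤ M)
    (T : X →L[ℝ] X)
    (hT : ∀ x : X, HasSum (fun n => (Real.sqrt (lam n) * ⟪x, e n⟫) • e n) (T x))
    (phi : (ℕ →₀ ℕ) → X → ℝ)
    (hphi : ∀ (g : ℕ →₀ ℕ) (x : X), phi g x =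
      Real.sqrt ((g.prod fun n k => lam n ^ k) / (g.prod fun n k => (Nat.factorial k : ℝ))) *
        Real.exp (-(1/2) * ‖T x‖ ^ 2) * g.prod fun n k => (⟪x, e n⟫ : ℝ) ^ k) :
    ∀ x y : X, HasSum (fun g : ℕ →₀ ℕ => phi g x * phi g y)
      (Real.exp (-(1/2) * ‖T x - T y‖ ^ 2)) :=
  seT_kernel_feature_expansion_general e lam hpos T hT phi hphi
end
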